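/- Let d be a positive integer, e = gcd(d, p^n - 1), C_d = { x^d : x ∈ F_{p^n} }, and let G : F_{p^n} → F_{p^n} be such that F(x) = G(x^d) is a quadratic function. Then F is differentially (e-1)-uniform if and only if the restriction of G to C_d is injective. -/

import Mathlib

/-! The derivative `x ↦ F (x + a) - F x` of a quadratic `F` is affine, so each of its fibres is
empty or a translate of its zero set. That zero set contains
`Z_a = {x | (x + a) ^ d = x ^ d}`, which has `e - 1` elements: `x ↦ (x + a) / x` is a bijection
onto the `d`-th roots of unity other than `1`. If `G` is injective on `C_d` the zero set is exactly
`Z_a`, so `F` is `(e - 1)`-uniform; if `G (u ^ d) = G (v ^ d)` with `u ^ d ≠ v ^ d`, the zero set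
for `a = u - v` also contains `v ∉ Z_a`, hence has `e` elements. -/

open Finset

theorem FiniteField.card_filter_pow_eq_one (K : Type*) [Field K] [Fintype K] [DecidableEq K]
    {d : ℕ} (hd : 0 < d) : #{x : K | x ^ d = 1} = d.gcd (Fintype.card K - 1) := by
  have : NeZero d := ⟨hd.ne'⟩
  calc #{x : K | x ^ d = 1} = Nat.card {x : K // x ^ d = 1} := by
        rw [Nat.card_eq_fintype_card, Fintype.card_subtype]
    _ = Nat.card (rootsOfUnity d K) :=
        Nat.card_congr <| (Equiv.subtypeEquivRight fun x => (Polynomial.mem_nthRoots hd).symm).trans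
          (rootsOfUnityEquivNthRoots K d).symm
    _ = d.gcd (Fintype.card K - 1) := by
        rw [rootsOfUnity_eq_ker, IsCyclic.card_powMonoidHom_ker, Nat.card_units,
          Nat.card_eq_fintype_card, Nat.gcd_comm]

theorem FiniteField.card_filter_add_pow_eq_pow {K : Type*} [Field K] [Fintype K] [DecidableEq K]
    {d : ℕ} (hd : 0 < d) {a : K} (ha : a ≠ 0) :
    #{x : K | (x + a) ^ d = x ^ d} = d.gcd (Fintype.card K - 1) - 1 := by
  rw [← card_filter_pow_eq_one K hd, ← card_erase_of_mem (by simp : (1 : K) ∈ _)]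
  have ne_zero_of_mem : ∀ x : K, (x + a) ^ d = x ^ d → x ≠ 0 := by
    rintro x hx rfl
    rw [zero_add, zero_pow hd.ne'] at hx
    exact ha (pow_eq_zero_iff hd.ne' |>.mp hx)
  have add_eq_mul : ∀ ζ : K, ζ ≠ 1 → a / (ζ - 1) + a = ζ * (a / (ζ - 1)) := fun ζ hζ => by
    field_simp [sub_ne_zero.mpr hζ]
    ring
  refine card_nbij' (fun x => (x + a) / x) (fun ζ => a / (ζ - 1)) ?_ ?_ ?_ ?_ <;>
    intro x hx <;> simp only [mem_coe, mem_filter, mem_erase, mem_univ, true_and] at hx ⊢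
  · have hx0 := ne_zero_of_mem x hx
    refine ⟨fun h => ha ?_, by rw [div_pow, hx, div_self (pow_ne_zero _ hx0)]⟩
    rw [div_eq_one_iff_eq hx0] at h
    linear_combination h
  · rw [add_eq_mul x hx.1, mul_pow, hx.2, one_mul]
  · rw [add_div, div_self (ne_zero_of_mem x hx), add_sub_cancel_left, div_div_cancel₀ ha]
  · rw [add_eq_mul x hx.1, mul_div_cancel_right₀ _ (div_ne_zero ha (sub_ne_zero.mpr hx.1))]

theorem card_filter_eq_le_of_affine {A B : Type*} [AddCommGroup A] [Fintype A] [AddCommGroup B]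
    [DecidableEq B] {f : A → B} (hf : ∀ x y, f (x + y) = f x + f y - f 0) (b : B) (x₀ : A) :
    #{x | f x = b} ≤ #{x | f x = f x₀} := by
  by_cases hb : b ∈ Set.range f
  · let g : A →+ B := AddMonoidHom.mk' (fun x => f x - f 0) fun x y => by
      simp only [hf]; abel
    have fiber_g : ∀ c, #{x | f x = c} = #{x | g x = c - f 0} := fun c => by
      simp [g, sub_left_inj]
    rw [fiber_g, fiber_g]
    refine (AddMonoidHom.card_fiber_eq_of_mem_range g ?_ ?_).le
    · obtain ⟨x, rfl⟩ := hb; exact ⟨x, rfl⟩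
    · exact ⟨x₀, rfl⟩
  · rw [filter_false_of_mem fun x _ hx => hb ⟨x, hx⟩, card_empty]
    exact Nat.zero_le _

section PowerComposition

variable {K : Type*} [CommRing K] [Fintype K] [DecidableEq K] {d : ℕ} {G F : K → K}

theorem filter_add_pow_eq_pow_subset (hF : ∀ x, F x = G (x ^ d)) (a : K) :
    ({x | (x + a) ^ d = x ^ d} : Finset K) ⊆ ({x | F (x + a) - F x = 0} : Finset K) := by
  intro x hx
  simp only [mem_filter, mem_univ, true_and] at hx ⊢
  rw [hF, hF, hx, sub_self]

theorem filter_sub_eq_zero_eq_of_injOn (hF : ∀ x, F x = G (x ^ d))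
    (hG : Set.InjOn G {y | ∃ x, y = x ^ d}) (a : K) :
    ({x | F (x + a) - F x = 0} : Finset K) = ({x | (x + a) ^ d = x ^ d} : Finset K) := by
  refine subset_antisymm ?_ (filter_add_pow_eq_pow_subset hF a)
  intro x hx
  simp only [mem_filter, mem_univ, true_and, hF, sub_eq_zero] at hx ⊢
  exact hG ⟨x + a, rfl⟩ ⟨x, rfl⟩ hx

theorem card_filter_add_pow_eq_pow_lt (hF : ∀ x, F x = G (x ^ d)) {u v : K}
    (huv : u ^ d ≠ v ^ d) (hG : G (u ^ d) = G (v ^ d)) :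
    #{x | (x + (u - v)) ^ d = x ^ d} < #{x | F (x + (u - v)) - F x = 0} := by
  have hv : v ∈ ({x | F (x + (u - v)) - F x = 0} : Finset K) := by
    simp only [mem_filter, mem_univ, true_and, add_sub_cancel, hF, hG, sub_self]
  have hv' : v ∉ ({x | (x + (u - v)) ^ d = x ^ d} : Finset K) := by
    simpa only [mem_filter, mem_univ, true_and, add_sub_cancel] using huv
  exact card_lt_card ((ssubset_iff_of_subset (filter_add_pow_eq_pow_subset hF _)).mpr ⟨v, hv, hv'⟩)

end PowerComposition

theorem stmt3_general (p n d : ℕ) (hd : 0 < d)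
    (K : Type) [Field K] [Fintype K] [DecidableEq K]
    (hcard : Fintype.card K = p ^ n)
    (e : ℕ) (he : e = Nat.gcd d (p ^ n - 1)) (he2 : 2 ≤ e)
    (G : K → K) (F : K → K) (hF : ∀ x : K, F x = G (x ^ d))
    (hquad : ∀ a x y : K,
      F (x + y + a) - F (x + y) = (F (x + a) - F x) + (F (y + a) - F y) - (F a - F 0)) :
    (∀ a : K, a ≠ 0 → ∀ b : K,
      (Finset.univ.filter (fun x : K => F (x + a) - F x = b)).card ≤ e - 1) ↔
    Set.InjOn G {y : K | ∃ x : K, y = x ^ d} := by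
  have card_zeros : ∀ a : K, a ≠ 0 → #{x : K | (x + a) ^ d = x ^ d} = e - 1 := fun a ha => by
    rw [FiniteField.card_filter_add_pow_eq_pow hd ha, hcard, he]
  constructor
  · rintro huniform _ ⟨u, rfl⟩ _ ⟨v, rfl⟩ hG
    by_contra huv
    have ha : u - v ≠ 0 := sub_ne_zero.mpr (ne_of_apply_ne (· ^ d) huv)
    have hlt := card_filter_add_pow_eq_pow_lt hF huv hG
    rw [card_zeros _ ha] at hlt
    exact hlt.not_ge (huniform _ ha 0)
  · intro hG a ha b
    obtain ⟨x₀, hx₀⟩ : ({x | (x + a) ^ d = x ^ d} : Finset K).Nonempty :=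
      card_pos.mp (by rw [card_zeros a ha]; omega)
    calc #{x | F (x + a) - F x = b} ≤ #{x | F (x + a) - F x = F (x₀ + a) - F x₀} :=
          card_filter_eq_le_of_affine (fun x y => by simpa only [zero_add] using hquad a x y) b x₀
      _ = #{x | (x + a) ^ d = x ^ d} := by
          rw [(mem_filter.mp (filter_add_pow_eq_pow_subset hF a hx₀)).2,
            filter_sub_eq_zero_eq_of_injOn hF hG]
      _ = e - 1 := card_zeros a ha

theorem stmt3 (p n d : ℕ) (hp : p.Prime) (hn : 0 < n) (hd : 0 < d)
    (K : Type) [Field K] [Fintype K] [DecidableEq K]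
    (hcard : Fintype.card K = p ^ n)
    (e : ℕ) (he : e = Nat.gcd d (p ^ n - 1)) (he2 : 2 ≤ e)
    (G : K → K) (F : K → K) (hF : ∀ x : K, F x = G (x ^ d))
    (hquad : ∀ a x y : K,
      F (x + y + a) - F (x + y) = (F (x + a) - F x) + (F (y + a) - F y) - (F a - F 0)) :
    (∀ a : K, a ≠ 0 → ∀ b : K,
      (Finset.univ.filter (fun x : K => F (x + a) - F x = b)).card ≤ e - 1) ↔
    Set.InjOn G {y : K | ∃ x : K, y = x ^ d} :=
  stmt3_general p n d hd K hcard e he he2 G F hF hquad
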